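/- For λ ∈ Γ_k with λ₁ ≥ ⋯ ≥ λₙ, there is a dimensional constant c₀ > 0 such that λ₁·σ_k^{11}(λ) ≥ c₀·σ_k(λ), where σ_k^{11}(λ) = σ_{k−1}(λ|1). -/

import Mathlib

/-- The `m`-th elementary symmetric polynomial of `x : Fin n → ℝ`. -/
noncomputable def esymm (n m : ℕ) (x : Fin n → ℝ) : ℝ :=
  ∑ s ∈ Finset.powersetCard m (Finset.univ : Finset (Fin n)), ∏ i ∈ s, x i

/-- The `m`-th elementary symmetric polynomial of the entries of `x` with indices in `s`. -/
noncomputable def esymmRes (n : ℕ) (s : Finset (Fin n)) (m : ℕ) (x : Fin n → ℝ) : ℝ :=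
  ∑ t ∈ Finset.powersetCard m s, ∏ i ∈ t, x i

/-!
Write `λ = (λ₁, μ)`, so that `σ_k(λ) = σ_k(μ) + λ₁ σ_{k-1}(μ)`. Everything rests on Newton's
inequalities `E_m E_{m+2} ≤ E_{m+1}²` for the normalized means `E_m = σ_m / C(N, m)`; Rolle's
theorem reduces them to `N = m + 2`, and inverting the entries reduces that case to
Cauchy–Schwarz. They give, first, `μ ∈ Γ_{k-1}`: at the first `j` with `σ_{j+1}(μ) ≤ 0`, positivity
of `σ_{j+1}(λ)` and `σ_{j+2}(λ)` would force `σ_j(μ) σ_{j+2}(μ) > σ_{j+1}(μ)²`. Second, on `Γ_{k-1}`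
the ratios `E_{j+1} / E_j` decrease, so `E_k(μ) ≤ E_{k-1}(μ) E_1(μ) ≤ λ₁ E_{k-1}(μ)`, that is
`k σ_k(μ) ≤ (n - k) λ₁ σ_{k-1}(μ)`. Adding `k λ₁ σ_{k-1}(μ)` gives `k σ_k(λ) ≤ n λ₁ σ_{k-1}(μ)`,
so `c₀ = k / n` works.
-/

theorem Nat.choose_mul_choose_add_two_le_sq (N m : ℕ) :
    N.choose m * N.choose (m + 2) ≤ N.choose (m + 1) ^ 2 := by
  rcases lt_or_ge N (m + 1) with hN | hN
  · simp [Nat.choose_eq_zero_of_lt (show N < m + 2 by omega)]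
  obtain ⟨a, rfl⟩ := Nat.exists_eq_add_of_le hN
  have h1 := Nat.choose_succ_right_eq (m + 1 + a) m
  have h2 := Nat.choose_succ_right_eq (m + 1 + a) (m + 1)
  rw [show m + 1 + a - m = a + 1 by omega] at h1
  rw [show m + 1 + a - (m + 1) = a by omega] at h2
  refine Nat.le_of_mul_le_mul_right (c := (a + 1) * (m + 2)) ?_ (by positivity)
  calc _ = ((m + 1 + a).choose m * (a + 1)) * ((m + 1 + a).choose (m + 2) * (m + 2)) := by ring
    _ = (m + 1 + a).choose (m + 1) ^ 2 * ((m + 1) * a) := by rw [← h1, h2]; ring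
    _ ≤ _ := by rw [mul_comm (a + 1)]; gcongr <;> omega

theorem Finset.map_univ_val_eq_cons_compl {α β : Type*} [Fintype α] [DecidableEq α] (f : α → β)
    (a : α) : Finset.univ.val.map f = f a ::ₘ (({a} : Finset α)ᶜ).val.map f := by
  rw [← Multiset.map_cons, ← Finset.cons_val (show a ∉ ({a} : Finset α)ᶜ by simp)]
  congr
  ext i
  by_cases i = a <;> simp_all

namespace Multiset

section CommSemiring

variable {R : Type*} [CommSemiring R] (s : Multiset R)

theorem esymm_zero : s.esymm 0 = 1 := by
  simp [esymm]

theorem esymm_one : s.esymm 1 = s.sum := by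
  simp [esymm, powersetCard_one]

theorem esymm_eq_zero_of_card_lt {m : ℕ} (h : card s < m) : s.esymm m = 0 := by
  simp [esymm, powersetCard_eq_empty _ h]

theorem esymm_card : s.esymm (card s) = s.prod := by
  simp [esymm, powersetCard_self]

theorem esymm_cons_succ (a : R) (m : ℕ) :
    (a ::ₘ s).esymm (m + 1) = s.esymm (m + 1) + a * s.esymm m := by
  simp [esymm, powersetCard_cons, sum_map_mul_left]

end CommSemiring

variable (s : Multiset ℝ)

theorem two_mul_esymm_two : 2 * s.esymm 2 = s.sum ^ 2 - (s.map (· ^ 2)).sum := by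
  induction s using Multiset.induction_on with
  | empty => simp [esymm_eq_zero_of_card_lt 0 (show card 0 < 2 by simp)]
  | cons a s ih =>
    rw [esymm_cons_succ, esymm_one, sum_cons, map_cons, sum_cons]
    linear_combination ih

theorem sq_sum_le_card_mul_sum_sq : s.sum ^ 2 ≤ card s * (s.map (· ^ 2)).sum := by
  induction s using Multiset.induction_on with
  | empty => simp
  | cons a s ih =>
    rw [sum_cons, map_cons, sum_cons, card_cons]
    push_cast
    rcases (card s).eq_zero_or_pos with h | h
    · simp_all [card_eq_zero.1 h]
    · have hN : (0 : ℝ) < card s := by exact_mod_cast h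
      -- with `N`, `S`, `Q` the size, sum and sum of squares of `s`, the defect is
      -- `(N a² - 2aS + Q) + (NQ - S²)`, and `N (N a² - 2aS + Q) = (Na - S)² + (NQ - S²)`
      nlinarith [sq_nonneg (card s * a - s.sum)]

theorem esymm_eq_prod_mul_esymm_inv (h0 : (0 : ℝ) ∉ s) {j : ℕ} (hj : j ≤ card s) :
    s.esymm j = s.prod * (s.map (·⁻¹)).esymm (card s - j) := by
  induction s using Multiset.induction_on generalizing j with
  | empty => simp_all [esymm_zero]
  | cons a s ih =>
    have ha : a ≠ 0 := fun h => h0 (h ▸ mem_cons_self a s)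
    have ih := @ih (fun h => h0 (mem_cons_of_mem h))
    rw [card_cons] at hj
    rw [prod_cons, map_cons, card_cons]
    rcases j with _ | j
    · rw [esymm_zero, Nat.sub_zero, esymm_cons_succ, esymm_eq_zero_of_card_lt _ (by simp)]
      have h := ih (Nat.zero_le _)
      rw [esymm_zero, Nat.sub_zero] at h
      linear_combination h - s.prod * (s.map (·⁻¹)).esymm (card s) * mul_inv_cancel₀ ha
    · rw [esymm_cons_succ]
      rcases (show j = card s ∨ j < card s by omega) with rfl | hjs
      · rw [Nat.sub_self, esymm_zero, esymm_eq_zero_of_card_lt _ (Nat.lt_succ_self _), ih le_rfl,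
          Nat.sub_self, esymm_zero]
        ring
      · obtain ⟨i, hi⟩ : ∃ i, card s - j = i + 1 := ⟨card s - j - 1, by omega⟩
        rw [show card s + 1 - (j + 1) = i + 1 by omega, esymm_cons_succ, ih hjs, ih (by omega), hi,
          show card s - (j + 1) = i by omega]
        field_simp
        ring

noncomputable def esymmMean (m : ℕ) : ℝ := s.esymm m / (card s).choose m

theorem esymm_eq_choose_mul_esymmMean (m : ℕ) :
    s.esymm m = (card s).choose m * s.esymmMean m := by
  rcases le_or_gt m (card s) with hm | hm
  · have : ((card s).choose m : ℝ) ≠ 0 := by exact_mod_cast (Nat.choose_pos hm).ne'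
    rw [esymmMean]
    field_simp
  · simp [esymmMean, esymm_eq_zero_of_card_lt _ hm]

theorem esymmMean_eq_zero_of_card_lt {m : ℕ} (h : card s < m) : s.esymmMean m = 0 := by
  rw [esymmMean, esymm_eq_zero_of_card_lt s h, zero_div]

theorem esymmMean_zero : s.esymmMean 0 = 1 := by
  simp [esymmMean, esymm_zero]

theorem esymmMean_eq_prod_mul_esymmMean_inv (h0 : (0 : ℝ) ∉ s) {j : ℕ} (hj : j ≤ card s) :
    s.esymmMean j = s.prod * (s.map (·⁻¹)).esymmMean (card s - j) := by
  rw [esymmMean, esymmMean, esymm_eq_prod_mul_esymm_inv s h0 hj, card_map, Nat.choose_symm hj,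
    mul_div_assoc]

theorem esymmMean_two_le_sq : s.esymmMean 2 ≤ s.esymmMean 1 ^ 2 := by
  rcases lt_or_ge (card s) 2 with hs | hs
  · simp [esymmMean, esymm_eq_zero_of_card_lt _ hs, sq_nonneg]
  have hN : (2 : ℝ) ≤ card s := by exact_mod_cast hs
  have h2 := two_mul_esymm_two s
  have hCS := sq_sum_le_card_mul_sum_sq s
  rw [esymmMean, esymmMean, Nat.cast_choose_two, Nat.choose_one_right, esymm_one,
    div_pow, div_le_div_iff₀ (by nlinarith) (by positivity)]
  nlinarith

theorem esymmMean_mul_esymmMean_le_sq_of_card_eq {m : ℕ} (hs : card s = m + 2) :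
    s.esymmMean m * s.esymmMean (m + 2) ≤ s.esymmMean (m + 1) ^ 2 := by
  by_cases h0 : (0 : ℝ) ∈ s
  · have : s.esymmMean (m + 2) = 0 := by
      rw [esymmMean, ← hs, esymm_card, prod_eq_zero h0, zero_div]
    rw [this, mul_zero]
    positivity
  · simp only [esymmMean_eq_prod_mul_esymmMean_inv s h0 (show m ≤ card s by omega),
      esymmMean_eq_prod_mul_esymmMean_inv s h0 (show m + 1 ≤ card s by omega),
      esymmMean_eq_prod_mul_esymmMean_inv s h0 hs.ge, hs, show m + 2 - m = 2 by omega,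
      show m + 2 - (m + 1) = 1 by omega, Nat.sub_self, esymmMean_zero]
    nlinarith [esymmMean_two_le_sq (s.map (·⁻¹)), sq_nonneg s.prod]

open Polynomial in
/-- By Rolle's theorem the derivative of `∏ (X - r)` again has only real roots, and differentiation
leaves the normalized coefficients unchanged. -/
theorem exists_card_add_one_eq_esymmMean_eq (hs : s ≠ 0) :
    ∃ t : Multiset ℝ, card t + 1 = card s ∧ ∀ j ≤ card t, t.esymmMean j = s.esymmMean j := by
  set P : ℝ[X] := (s.map fun r => X - C r).prod
  set N := card s
  have hN : 0 < N := card_pos.2 hs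
  have hdeg : P.natDegree = N := natDegree_multiset_prod_X_sub_C_eq_card s
  have hdeg' : (derivative P).natDegree = N - 1 := by rw [natDegree_derivative, hdeg]
  have hroots : card (derivative P).roots = N - 1 := by
    have := card_roots_le_derivative P
    rw [roots_multiset_prod_X_sub_C] at this
    have := card_roots' (derivative P)
    omega
  have hP : ∀ l, l ≤ N → P.coeff l = (-1) ^ (N - l) * s.esymm (N - l) :=
    fun l hl => prod_X_sub_C_coeff s hl
  have hlc : (derivative P).leadingCoeff = N := by
    rw [leadingCoeff, hdeg', coeff_derivative, Nat.sub_add_cancel hN, hP N le_rfl, Nat.sub_self,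
      esymm_zero, Nat.cast_sub hN]
    ring
  refine ⟨(derivative P).roots, by omega, fun j hj => ?_⟩
  have hcoeff := coeff_eq_esymm_roots_of_card (hroots.trans hdeg'.symm)
    (show N - 1 - j ≤ (derivative P).natDegree by omega)
  rw [coeff_derivative, hP _ (by omega), hlc, hdeg', show N - (N - 1 - j + 1) = j by omega,
    show N - 1 - (N - 1 - j) = j by omega, show N - 1 - j = N - (j + 1) by omega] at hcoeff
  rw [show ((N - (j + 1) : ℕ) : ℝ) + 1 = (N - j : ℕ) by norm_cast; omega] at hcoeff
  have hR : s.esymm j * (N - j : ℕ) = N * (derivative P).roots.esymm j :=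
    mul_left_cancel₀ (pow_ne_zero j (neg_ne_zero.2 one_ne_zero)) (by linear_combination hcoeff)
  have hchoose : ((N - 1).choose j : ℝ) * N = N.choose j * (N - j : ℕ) := by
    have := Nat.choose_mul_succ_eq (N - 1) j
    rw [Nat.sub_add_cancel hN] at this
    exact_mod_cast this
  have hC : ((N - 1).choose j : ℝ) ≠ 0 := by exact_mod_cast (Nat.choose_pos (by omega)).ne'
  have hC' : (N.choose j : ℝ) ≠ 0 := by exact_mod_cast (Nat.choose_pos (by omega)).ne'
  rw [esymmMean, esymmMean, hroots, div_eq_div_iff hC hC']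
  refine mul_right_cancel₀ (show (N : ℝ) ≠ 0 by positivity) ?_
  linear_combination (-(N.choose j : ℝ)) * hR - s.esymm j * hchoose

/-- Newton's inequalities. -/
theorem esymmMean_mul_esymmMean_le_sq (m : ℕ) :
    s.esymmMean m * s.esymmMean (m + 2) ≤ s.esymmMean (m + 1) ^ 2 := by
  induction hN : card s generalizing s with
  | zero =>
    rw [esymmMean_eq_zero_of_card_lt s (m := m + 2) (by omega), mul_zero]
    positivity
  | succ N ih =>
    rcases lt_trichotomy (N + 1) (m + 2) with hlt | heq | hgt
    · rw [esymmMean_eq_zero_of_card_lt s (m := m + 2) (by omega), mul_zero]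
      positivity
    · exact esymmMean_mul_esymmMean_le_sq_of_card_eq s (hN.trans heq)
    · obtain ⟨t, ht, hts⟩ := exists_card_add_one_eq_esymmMean_eq s (card_pos.1 (by omega))
      rw [← hts m (by omega), ← hts (m + 1) (by omega), ← hts (m + 2) (by omega)]
      exact ih t (by omega)

theorem esymm_mul_esymm_le_sq (m : ℕ) : s.esymm m * s.esymm (m + 2) ≤ s.esymm (m + 1) ^ 2 := by
  have hC : ((card s).choose m * (card s).choose (m + 2) : ℝ) ≤ (card s).choose (m + 1) ^ 2 := by
    exact_mod_cast Nat.choose_mul_choose_add_two_le_sq (card s) m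
  simp only [esymm_eq_choose_mul_esymmMean s]
  calc _ = ((card s).choose m * (card s).choose (m + 2) : ℝ) *
        (s.esymmMean m * s.esymmMean (m + 2)) := by ring
    _ ≤ ((card s).choose m * (card s).choose (m + 2) : ℝ) * s.esymmMean (m + 1) ^ 2 := by
      gcongr
      exact esymmMean_mul_esymmMean_le_sq s m
    _ ≤ (card s).choose (m + 1) ^ 2 * s.esymmMean (m + 1) ^ 2 := by gcongr
    _ = _ := by ring

def InGammaCone (k : ℕ) (s : Multiset ℝ) : Prop := ∀ j ≤ k, 0 < s.esymm j

variable {s}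

theorem InGammaCone.mono {k l : ℕ} (h : InGammaCone k s) (hl : l ≤ k) : InGammaCone l s :=
  fun j hj => h j (hj.trans hl)

theorem InGammaCone.le_card {k : ℕ} (h : InGammaCone k s) : k ≤ card s := by
  by_contra! hk
  exact (h k le_rfl).ne' (esymm_eq_zero_of_card_lt s hk)

theorem InGammaCone.esymmMean_pos {k : ℕ} (h : InGammaCone k s) {j : ℕ} (hj : j ≤ k) :
    0 < s.esymmMean j :=
  div_pos (h j hj) (by exact_mod_cast Nat.choose_pos ((h.mono hj).le_card))

theorem InGammaCone.of_cons {k : ℕ} {a : ℝ} (h : InGammaCone (k + 1) (a ::ₘ s)) :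
    InGammaCone k s := by
  intro j hj
  induction j with
  | zero => simp [esymm_zero]
  | succ j ih =>
    have hj₀ := ih (by omega)
    have h₁ := h (j + 1) (by omega)
    have h₂ := h (j + 2) (by omega)
    rw [esymm_cons_succ] at h₁ h₂
    have hN := esymm_mul_esymm_le_sq s j
    by_contra! hneg
    -- `σ_{j+1}(s) ≤ 0` forces `a > 0` and `σ_{j+2}(s) > 0`, and then `σ_j σ_{j+2} > σ_{j+1}²`
    have ha : 0 < a := pos_of_mul_pos_right (by linarith : 0 < s.esymm j * a) hj₀.le
    have h₂' : -(a * s.esymm (j + 1)) < s.esymm (j + 2) := by linarith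
    nlinarith [mul_lt_mul_of_pos_left h₂' hj₀]

theorem InGammaCone.esymmMean_succ_le {k : ℕ} (h : InGammaCone k s) :
    s.esymmMean (k + 1) ≤ s.esymmMean k * s.esymmMean 1 := by
  induction k with
  | zero => rw [esymmMean_zero, one_mul]
  | succ k ih =>
    have hk := h.esymmMean_pos k.le_succ
    have hk₁ := h.esymmMean_pos le_rfl
    have hN := esymmMean_mul_esymmMean_le_sq s k
    refine le_of_mul_le_mul_left ?_ hk
    nlinarith [mul_le_mul_of_nonneg_left (ih (h.mono k.le_succ)) hk₁.le]

theorem esymmMean_one_le {a : ℝ} (hs : s ≠ 0) (ha : ∀ x ∈ s, x ≤ a) : s.esymmMean 1 ≤ a := by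
  have hN : (0 : ℝ) < card s := by exact_mod_cast card_pos.2 hs
  rw [esymmMean, esymm_one, Nat.choose_one_right, div_le_iff₀ hN, mul_comm]
  simpa using sum_le_card_nsmul s a ha

theorem InGammaCone.succ_mul_esymm_succ_le {k : ℕ} {a : ℝ} (h : InGammaCone k s)
    (ha : ∀ x ∈ s, x ≤ a) : (k + 1) * s.esymm (k + 1) ≤ (card s - k : ℕ) * a * s.esymm k := by
  rcases eq_or_ne s 0 with rfl | hs
  · simp [esymm_eq_zero_of_card_lt 0 (show card 0 < k + 1 by simp)]
  have hchoose :
      ((k + 1) * (card s).choose (k + 1) : ℝ) = (card s).choose k * (card s - k : ℕ) := by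
    exact_mod_cast (mul_comm _ _).trans (Nat.choose_succ_right_eq (card s) k)
  have hmean := mul_le_mul_of_nonneg_left
    ((h.esymmMean_succ_le).trans (mul_le_mul_of_nonneg_left (esymmMean_one_le hs ha)
      (h.esymmMean_pos le_rfl).le))
    (by positivity : (0 : ℝ) ≤ (card s).choose k * (card s - k : ℕ))
  rw [esymm_eq_choose_mul_esymmMean s (k + 1), esymm_eq_choose_mul_esymmMean s k, ← mul_assoc,
    hchoose]
  linarith

theorem InGammaCone.succ_mul_esymm_cons_le {k : ℕ} {a : ℝ} (h : InGammaCone (k + 1) (a ::ₘ s))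
    (ha : ∀ x ∈ s, x ≤ a) :
    (k + 1) * (a ::ₘ s).esymm (k + 1) ≤ (card s + 1) * (a * s.esymm k) := by
  have hs := h.of_cons
  have hk := hs.le_card
  have hbound := hs.succ_mul_esymm_succ_le ha
  rw [Nat.cast_sub hk] at hbound
  rw [esymm_cons_succ]
  linarith

end Multiset

theorem stmt14 (n k : ℕ) (hk : 1 ≤ k) (hkn : k ≤ n) :
    ∃ c₀ : ℝ, 0 < c₀ ∧
      ∀ lam : Fin n → ℝ,
        (∀ m, 1 ≤ m → m ≤ k → 0 < esymm n m lam) →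
        (∀ i j : Fin n, i ≤ j → lam j ≤ lam i) →
        lam ⟨0, by omega⟩ * esymmRes n ({(⟨0, by omega⟩ : Fin n)} : Finset (Fin n))ᶜ (k - 1) lam
          ≥ c₀ * esymm n k lam := by
  have hn : (0 : ℝ) < n := by exact_mod_cast (show 0 < n by omega)
  refine ⟨k / n, div_pos (by exact_mod_cast hk) hn, fun lam hΓ hdec => ?_⟩
  set i₀ : Fin n := ⟨0, by omega⟩
  set s := (({i₀} : Finset (Fin n))ᶜ).val.map lam
  have hesymm (m : ℕ) : esymm n m lam = (lam i₀ ::ₘ s).esymm m := by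
    rw [← Finset.map_univ_val_eq_cons_compl, Finset.esymm_map_val]; rfl
  have hcone : Multiset.InGammaCone k (lam i₀ ::ₘ s) := by
    rintro (_ | j) hj
    · simp [Multiset.esymm_zero]
    · exact hesymm _ ▸ hΓ _ (by omega) hj
  have hmax : ∀ x ∈ s, x ≤ lam i₀ := by
    simp only [s, Multiset.mem_map]
    rintro _ ⟨i, -, rfl⟩
    exact hdec i₀ i (Fin.mk_le_mk.2 (Nat.zero_le _))
  have hcard : (Multiset.card s : ℝ) + 1 = n := by
    simp only [s, Multiset.card_map, Finset.card_val, Finset.card_compl, Fintype.card_fin,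
      Finset.card_singleton]
    norm_cast; omega
  obtain ⟨k, rfl⟩ := Nat.exists_eq_add_of_le' hk
  have key := hcone.succ_mul_esymm_cons_le hmax
  rw [hcard] at key
  rw [Nat.add_sub_cancel, hesymm, show esymmRes n {i₀}ᶜ k lam = s.esymm k from
    (Finset.esymm_map_val lam _ k).symm, ge_iff_le, div_mul_eq_mul_div, div_le_iff₀ hn]
  push_cast
  linarith
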